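/- Let H be a two-dimensional complex inner product space and let e, f : Fin 2 → H be orthonormal bases with associated classical structures δ_e and δ_f. Then every subspace K of H copyable along both δ_e and δ_f satisfies K = ⊥ or K = ⊤ if and only if ℂ ∙ (e i) ≠ ℂ ∙ (f j) for all i, j : Fin 2, i.e. the two bases share no common ray. (In particular, classical structures induced by different rays in ℂ² always have trivially intersecting collections of copyables.) -/

import Mathlib

open scoped TensorProduct InnerProductSpace

/-- The orthogonal projection of `H` onto the subspace `K`, regarded as an endomorphism
`P_K : H →ₗ[ℂ] H`. -/
noncomputable def projL {H : Type*} [NormedAddCommGroup H] [InnerProductSpace ℂ H]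
    [FiniteDimensional ℂ H] (K : Submodule ℂ H) : H →ₗ[ℂ] H :=
  K.subtype ∘ₗ K.orthogonalProjection.toLinearMap

/-- The classical structure `δ_e : H →ₗ[ℂ] H ⊗[ℂ] H` associated with an orthonormal basis
`e`, determined by `δ_e x = ∑ i, ⟪e i, x⟫_ℂ • (e i ⊗ₜ e i)`. -/
noncomputable def delta {ι H : Type*} [Fintype ι] [NormedAddCommGroup H]
    [InnerProductSpace ℂ H] (e : ι → H) : H →ₗ[ℂ] H ⊗[ℂ] H :=
  ∑ i, (innerSL ℂ (e i)).toLinearMap.smulRight (e i ⊗ₜ[ℂ] e i)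

/-- A subspace `K` of `H` is copyable along `δ_e` if `δ_e ∘ₗ P_K = (P_K ⊗ P_K) ∘ₗ δ_e`. -/
def Copyable {ι H : Type*} [Fintype ι] [NormedAddCommGroup H] [InnerProductSpace ℂ H]
    [FiniteDimensional ℂ H] (e : ι → H) (K : Submodule ℂ H) : Prop :=
  delta e ∘ₗ projL K = TensorProduct.map (projL K) (projL K) ∘ₗ delta e

/-!
The copyable vectors of `δ_e`, those `w ≠ 0` with `δ_e w = w ⊗ w`, are exactly the basis
vectors: contracting `δ_e w = w ⊗ w` in its first factor against `e i` gives
`⟪e i, w⟫ • e i = ⟪e i, w⟫ • w`. If `K ≠ ⊥` is copyable, then `P_K (e k) ≠ 0` for some `k`,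
and evaluating the copyability identity at `e k` shows that `P_K (e k)` is copyable, so `K`
contains a basis vector. In dimension two a nontrivial proper `K` is a line, so if it is
copyable along both `δ_e` and `δ_f` it equals both `ℂ ∙ e i` and `ℂ ∙ f j`. Conversely the ray
of a basis vector is always copyable, and is neither `⊥` nor `⊤`.
-/

section

variable {ι H : Type*} [Fintype ι] [NormedAddCommGroup H] [InnerProductSpace ℂ H]

lemma delta_apply (e : ι → H) (x : H) :
    delta e x = ∑ i, ⟪e i, x⟫_ℂ • (e i ⊗ₜ[ℂ] e i) := by
  simp [delta, LinearMap.sum_apply]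

lemma delta_apply_basis [DecidableEq ι] (e : OrthonormalBasis ι ℂ H) (k : ι) :
    delta e (e k) = e k ⊗ₜ[ℂ] e k := by
  simp [delta_apply, e.inner_eq_ite]

lemma OrthonormalBasis.exists_inner_ne_zero (e : OrthonormalBasis ι ℂ H) {w : H}
    (hw : w ≠ 0) : ∃ i, ⟪e i, w⟫_ℂ ≠ 0 := by
  by_contra! h
  exact hw (by simpa [h] using (e.sum_repr' w).symm)

lemma exists_eq_of_delta_apply_eq_tmul_self (e : OrthonormalBasis ι ℂ H) {w : H}
    (hw : w ≠ 0) (h : delta e w = w ⊗ₜ[ℂ] w) : ∃ i, e i = w := by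
  classical
  obtain ⟨i, hi⟩ := e.exists_inner_ne_zero hw
  have hcontract := congrArg ((TensorProduct.lid ℂ H).toLinearMap ∘ₗ
    TensorProduct.map (innerSL ℂ (e i)).toLinearMap LinearMap.id) h
  simp [delta_apply, map_sum, e.inner_eq_ite] at hcontract
  exact ⟨i, smul_right_injective H hi hcontract⟩

variable [FiniteDimensional ℂ H]

lemma projL_apply (K : Submodule ℂ H) (x : H) : projL K x = K.starProjection x := rfl

lemma exists_basis_mem_of_copyable (e : OrthonormalBasis ι ℂ H) {K : Submodule ℂ H}
    (hK : K ≠ ⊥) (hc : Copyable e K) : ∃ i, e i ∈ K := by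
  classical
  obtain ⟨k, hk⟩ : ∃ k, projL K (e k) ≠ 0 := by
    by_contra! h
    refine hK ((Submodule.orthogonal_eq_top_iff K).1 (eq_top_iff.2 ?_))
    rw [← e.toBasis.span_eq, Submodule.span_le, Set.range_subset_iff]
    simpa [projL_apply, Submodule.starProjection_apply_eq_zero_iff] using h
  have hcopy : delta e (projL K (e k)) = projL K (e k) ⊗ₜ[ℂ] projL K (e k) := by
    simpa [delta_apply_basis] using LinearMap.congr_fun hc (e k)
  obtain ⟨i, hi⟩ := exists_eq_of_delta_apply_eq_tmul_self e hk hcopy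
  exact ⟨i, hi ▸ K.starProjection_apply_mem (e k)⟩

lemma copyable_span_singleton_basis [DecidableEq ι] (e : OrthonormalBasis ι ℂ H) (i : ι) :
    Copyable e (ℂ ∙ e i) := by
  have hP : ∀ k, projL (ℂ ∙ e i) (e k) = if i = k then e k else 0 := by
    intro k
    rw [projL_apply, Submodule.starProjection_unit_singleton ℂ (e.orthonormal.1 i),
      e.inner_eq_ite]
    split_ifs with h <;> simp [h]
  refine e.toBasis.ext fun k => ?_
  simp only [LinearMap.comp_apply, OrthonormalBasis.coe_toBasis, hP, delta_apply_basis,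
    TensorProduct.map_tmul]
  split_ifs <;> simp [delta_apply_basis]

end

lemma Submodule.finrank_eq_one_of_ne_bot_of_ne_top {𝕜 V : Type*} [DivisionRing 𝕜]
    [AddCommGroup V] [Module 𝕜 V] [FiniteDimensional 𝕜 V] (hV : Module.finrank 𝕜 V = 2)
    {W : Submodule 𝕜 V} (hbot : W ≠ ⊥) (htop : W ≠ ⊤) : Module.finrank 𝕜 W = 1 := by
  have hlt := Submodule.finrank_lt htop
  have hpos := Submodule.finrank_eq_zero.not.2 hbot
  omega

/-- For a two-dimensional complex inner product space `H` and orthonormal bases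
`e, f : Fin 2 → H`, the classical structures `δ_e` and `δ_f` are partially complementary
(every subspace copyable along both is trivial) if and only if the two bases share no
common ray. -/
theorem partially_complementary_iff_no_common_ray
    {H : Type*} [NormedAddCommGroup H] [InnerProductSpace ℂ H] [FiniteDimensional ℂ H]
    (hdim : Module.finrank ℂ H = 2)
    (e f : OrthonormalBasis (Fin 2) ℂ H) :
    (∀ K : Submodule ℂ H, Copyable (⇑e) K → Copyable (⇑f) K → K = ⊥ ∨ K = ⊤) ↔
      ∀ i j : Fin 2, (ℂ ∙ (e i)) ≠ (ℂ ∙ (f j)) := by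
  constructor
  · intro h i j hij
    have hline : Module.finrank ℂ (ℂ ∙ e i) = 1 :=
      finrank_span_singleton (e.orthonormal.ne_zero i)
    rcases h _ (copyable_span_singleton_basis e i) (hij ▸ copyable_span_singleton_basis f j)
      with hbot | htop
    · exact e.orthonormal.ne_zero i (Submodule.span_singleton_eq_bot.1 hbot)
    · rw [htop, finrank_top, hdim] at hline
      omega
  · intro h K he hf
    by_contra! hK
    have hline := Submodule.finrank_eq_one_of_ne_bot_of_ne_top hdim hK.1 hK.2
    obtain ⟨i, hi⟩ := exists_basis_mem_of_copyable e hK.1 he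
    obtain ⟨j, hj⟩ := exists_basis_mem_of_copyable f hK.1 hf
    exact h i j <|
      (eq_span_singleton_of_mem_of_finrank_eq_one hline hi (e.orthonormal.ne_zero i)).symm.trans
        (eq_span_singleton_of_mem_of_finrank_eq_one hline hj (f.orthonormal.ne_zero j))
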